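/- The number of orbits of G = ℤ_q ⋊_n ℤ_p acting by simultaneous conjugation (g,h) ↦ (xgx⁻¹, xhx⁻¹) on the set {(g,h) ∈ G × G : gh = hg} of commuting pairs equals (q² − 1 + p³)/p. (This number is the rank of the Drinfeld double / of the Mignard–Schauenburg modular categories 𝒵(Vect_G^ω).) -/

import Mathlib

/-- The underlying set of the semidirect product `ℤ_q ⋊_n ℤ_p`. -/
def MS (p q : ℕ) (_n : ℕ) : Type := ZMod q × ZMod p

namespace MS

variable {p q n : ℕ}

/-- The element `a^l b^k = (l, k)` of `ℤ_q ⋊_n ℤ_p`. -/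
def mk (l : ZMod q) (k : ZMod p) : MS p q n := (l, k)

/-- The `ℤ/qℤ`-component of an element of `ℤ_q ⋊_n ℤ_p`. -/
def fst (g : MS p q n) : ZMod q := g.1

/-- The `ℤ/pℤ`-component of an element of `ℤ_q ⋊_n ℤ_p`. -/
def snd (g : MS p q n) : ZMod p := g.2

/-- The group structure of the semidirect product `ℤ_q ⋊_n ℤ_p`, with multiplication
`(l,k)·(l′,k′) = (l + n^k l′, k + k′)`, where `n` has multiplicative order `p` mod `q`. -/
instance instGroup [NeZero p] [hn : Fact (orderOf (n : ZMod q) = p)] :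
    Group (MS p q n) where
  mul g h := ((g.1 + (n : ZMod q) ^ g.2.val * h.1, g.2 + h.2) : ZMod q × ZMod p)
  one := ((0, 0) : ZMod q × ZMod p)
  inv g := ((-((n : ZMod q) ^ (-g.2).val * g.1), -g.2) : ZMod q × ZMod p)
  mul_assoc := by
    have h1 : (n : ZMod q) ^ p = 1 := by rw [← hn.out]; exact pow_orderOf_eq_one _
    have key : ∀ k₁ k₂ : ZMod p,
        (n : ZMod q) ^ (k₁ + k₂).val = (n : ZMod q) ^ k₁.val * (n : ZMod q) ^ k₂.val := by
      intro k₁ k₂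
      have h2 : k₁.val + k₂.val = (k₁ + k₂).val + p * ((k₁.val + k₂.val) / p) := by
        rw [ZMod.val_add]; exact (Nat.mod_add_div _ _).symm
      rw [← pow_add, h2, pow_add, pow_mul, h1, one_pow, mul_one]
    rintro ⟨l₁, k₁⟩ ⟨l₂, k₂⟩ ⟨l₃, k₃⟩
    show ((l₁ + (n : ZMod q) ^ k₁.val * l₂) + (n : ZMod q) ^ (k₁ + k₂).val * l₃,
        (k₁ + k₂) + k₃) =
      (l₁ + (n : ZMod q) ^ k₁.val * (l₂ + (n : ZMod q) ^ k₂.val * l₃), k₁ + (k₂ + k₃))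
    rw [key]
    exact Prod.ext (by ring) (add_assoc _ _ _)
  one_mul := by
    rintro ⟨l, k⟩
    show ((0 : ZMod q) + (n : ZMod q) ^ (0 : ZMod p).val * l, (0 : ZMod p) + k) = (l, k)
    rw [ZMod.val_zero, pow_zero, one_mul, zero_add, zero_add]
  mul_one := by
    rintro ⟨l, k⟩
    show (l + (n : ZMod q) ^ k.val * (0 : ZMod q), k + (0 : ZMod p)) = (l, k)
    rw [mul_zero, add_zero, add_zero]
  inv_mul_cancel := by
    rintro ⟨l, k⟩
    show (-((n : ZMod q) ^ (-k).val * l) + (n : ZMod q) ^ (-k).val * l, -k + k)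
      = ((0, 0) : ZMod q × ZMod p)
    rw [neg_add_cancel, neg_add_cancel]

instance [NeZero p] [NeZero q] : Fintype (MS p q n) :=
  inferInstanceAs (Fintype (ZMod q × ZMod p))

end MS

namespace MSAux

variable {p q n : ℕ}

section basic
variable [NeZero p] [hq : Fact q.Prime] [hn : Fact (orderOf (n : ZMod q) = p)]

omit [NeZero p] in
lemma zeta_pow_p : (n : ZMod q) ^ p = 1 := by
  rw [← hn.out]; exact pow_orderOf_eq_one _

lemma key (k₁ k₂ : ZMod p) :
    (n : ZMod q) ^ (k₁ + k₂).val = (n : ZMod q) ^ k₁.val * (n : ZMod q) ^ k₂.val := by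
  have h1 : (n : ZMod q) ^ p = 1 := zeta_pow_p (p := p)
  have h2 : k₁.val + k₂.val = (k₁ + k₂).val + p * ((k₁.val + k₂.val) / p) := by
    rw [ZMod.val_add]; exact (Nat.mod_add_div _ _).symm
  rw [← pow_add, h2, pow_add, pow_mul, h1, one_pow, mul_one]

lemma pow_val_eq_one_iff {i : ZMod p} : (n : ZMod q) ^ i.val = 1 ↔ i = 0 := by
  constructor
  · intro h
    have hd := orderOf_dvd_of_pow_eq_one h
    rw [hn.out] at hd
    have hlt : i.val < p := ZMod.val_lt i
    exact (ZMod.val_eq_zero i).mp (Nat.eq_zero_of_dvd_of_lt hd hlt)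
  · rintro rfl; simp

include p hn in
lemma zeta_ne_zero : (n : ZMod q) ≠ 0 := by
  intro h
  have h1 : (n : ZMod q) ^ p = 1 := zeta_pow_p (p := p)
  rw [h, zero_pow (NeZero.ne p)] at h1
  exact zero_ne_one h1

end basic

end MSAux
namespace MSAux
section grp
variable {p q n : ℕ} [NeZero p] [hq : Fact q.Prime] [hn : Fact (orderOf (n : ZMod q) = p)]

lemma mul_def (g h : MS p q n) :
    g * h = ((g.1 + (n : ZMod q) ^ g.2.val * h.1, g.2 + h.2) : ZMod q × ZMod p) := rfl

lemma inv_def (g : MS p q n) :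
    g⁻¹ = ((-((n : ZMod q) ^ (-g.2).val * g.1), -g.2) : ZMod q × ZMod p) := rfl

lemma one_def : (1 : MS p q n) = ((0, 0) : ZMod q × ZMod p) := rfl

lemma conj_def (x g : MS p q n) :
    x * g * x⁻¹ = (((1 - (n : ZMod q) ^ g.2.val) * x.1 + (n : ZMod q) ^ x.2.val * g.1,
      g.2) : ZMod q × ZMod p) := by
  rw [mul_def, mul_def, inv_def]
  have h1 : (n : ZMod q) ^ (x.2 + g.2).val * (n : ZMod q) ^ (-x.2).val
      = (n : ZMod q) ^ g.2.val := by
    rw [← key, add_comm x.2 g.2, add_assoc, add_neg_cancel, add_zero]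
  refine Prod.ext ?_ (by simp [add_assoc, add_comm])
  show x.1 + (n : ZMod q) ^ x.2.val * g.1 +
      (n : ZMod q) ^ (x.2 + g.2).val * -((n : ZMod q) ^ (-x.2).val * x.1) = _
  simp only []
  linear_combination (-x.1) * h1

end grp
end MSAux
namespace MSAux
section grp2
variable {p q n : ℕ} [NeZero p] [hq : Fact q.Prime] [hn : Fact (orderOf (n : ZMod q) = p)]

lemma comm_eq {g h : MS p q n} (hc : g * h = h * g) :
    g.1 + (n : ZMod q) ^ g.2.val * h.1 = h.1 + (n : ZMod q) ^ h.2.val * g.1 := by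
  rw [mul_def, mul_def] at hc
  exact congrArg Prod.fst hc

lemma sub_pow_ne_zero {i : ZMod p} (hi : i ≠ 0) : (1 - (n : ZMod q) ^ i.val) ≠ 0 := by
  intro e
  exact hi (pow_val_eq_one_iff.mp (by linear_combination -e))

lemma fst_eq_zero_of_comm {g h : MS p q n} (hc : g * h = h * g) (hg : g.2 = 0)
    (hh : h.2 ≠ 0) : g.1 = 0 := by
  have h1 := comm_eq hc
  rw [hg] at h1
  simp only [ZMod.val_zero, pow_zero, one_mul] at h1
  have h2 : (1 - (n : ZMod q) ^ h.2.val) * g.1 = 0 := by linear_combination h1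
  rcases mul_eq_zero.mp h2 with h3 | h3
  · exact absurd h3 (sub_pow_ne_zero hh)
  · exact h3

lemma fst_eq_zero_of_comm' {w : MS p q n} {i : ZMod p} (hi : i ≠ 0)
    (hc : w * (MS.mk 0 i : MS p q n) = (MS.mk 0 i : MS p q n) * w) : w.1 = 0 := by
  have h1 := comm_eq hc
  show w.1 = 0
  have h2 : (1 - (n : ZMod q) ^ i.val) * w.1 = 0 := by
    have : w.1 + (n : ZMod q) ^ w.2.val * 0 = 0 + (n : ZMod q) ^ i.val * w.1 := h1
    linear_combination this
  rcases mul_eq_zero.mp h2 with h3 | h3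
  · exact absurd h3 (sub_pow_ne_zero hi)
  · exact h3

/-- Normal form for commuting pairs not both in `ℤ_q`. -/
lemma normalize {g h : MS p q n} (hc : g * h = h * g) (hgh : ¬(g.2 = 0 ∧ h.2 = 0)) :
    ∃ x : MS p q n, x * g * x⁻¹ = ((0, g.2) : ZMod q × ZMod p) ∧
      x * h * x⁻¹ = ((0, h.2) : ZMod q × ZMod p) := by
  have main : ∀ u v : MS p q n, u * v = v * u → u.2 ≠ 0 →
      ∃ x : MS p q n, x * u * x⁻¹ = ((0, u.2) : ZMod q × ZMod p) ∧
        x * v * x⁻¹ = ((0, v.2) : ZMod q × ZMod p) := by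
    intro u v huv hu
    have hne : (1 - (n : ZMod q) ^ u.2.val) ≠ 0 := sub_pow_ne_zero hu
    set x : MS p q n := ((-(u.1) / (1 - (n : ZMod q) ^ u.2.val), 0) : ZMod q × ZMod p)
      with hx
    have hcu : x * u * x⁻¹ = ((0, u.2) : ZMod q × ZMod p) := by
      rw [conj_def]
      refine Prod.ext ?_ rfl
      show (1 - (n : ZMod q) ^ u.2.val) * (-(u.1) / (1 - (n : ZMod q) ^ u.2.val))
        + (n : ZMod q) ^ (0 : ZMod p).val * u.1 = 0
      rw [mul_div_cancel₀ _ hne]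
      simp
    refine ⟨x, hcu, ?_⟩
    have conjmul : ∀ a b : MS p q n, (x * a * x⁻¹) * (x * b * x⁻¹) = x * (a * b) * x⁻¹ := by
      intro a b; group
    have hcomm : (MS.mk 0 u.2 : MS p q n) * (x * v * x⁻¹)
        = (x * v * x⁻¹) * (MS.mk 0 u.2 : MS p q n) := by
      have hcu' : x * u * x⁻¹ = (MS.mk 0 u.2 : MS p q n) := hcu
      rw [← hcu', conjmul, conjmul, huv]
    have hsnd : (x * v * x⁻¹).2 = v.2 := by rw [conj_def]
    have hfst : (x * v * x⁻¹).1 = 0 := fst_eq_zero_of_comm' hu hcomm.symm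
    exact Prod.ext hfst hsnd
  by_cases hg : g.2 = 0
  · have hh : h.2 ≠ 0 := fun e => hgh ⟨hg, e⟩
    obtain ⟨x, h1, h2⟩ := main h g hc.symm hh
    exact ⟨x, h2, h1⟩
  · exact main g h hc hg

end grp2
end MSAux
namespace MSAux
section grp3
variable {p q n : ℕ} [NeZero p] [hq : Fact q.Prime] [hn : Fact (orderOf (n : ZMod q) = p)]

lemma comm_qq (a b : ZMod q) :
    (MS.mk a 0 : MS p q n) * MS.mk b 0 = (MS.mk b 0 : MS p q n) * MS.mk a 0 := by
  rw [mul_def, mul_def]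
  refine Prod.ext ?_ rfl
  show a + (n : ZMod q) ^ (0 : ZMod p).val * b = b + (n : ZMod q) ^ (0 : ZMod p).val * a
  simp [add_comm]

lemma comm_pp (i j : ZMod p) :
    (MS.mk 0 i : MS p q n) * MS.mk 0 j = (MS.mk 0 j : MS p q n) * MS.mk 0 i := by
  rw [mul_def, mul_def]
  refine Prod.ext ?_ (add_comm i j)
  show (0 : ZMod q) + (n : ZMod q) ^ i.val * 0 = 0 + (n : ZMod q) ^ j.val * 0
  simp

end grp3
end MSAux
namespace MSAux

/-- Nonzero vectors in `(ℤ/q)²`, tagged by `p n` for instance inference. -/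
def Xset (p q n : ℕ) : Type := {v : ZMod q × ZMod q // v ≠ 0}

section act
variable (p q n : ℕ) [NeZero p] [hq : Fact q.Prime] [hn : Fact (orderOf (n : ZMod q) = p)]

instance : MulAction (Multiplicative (ZMod p)) (Xset p q n) where
  smul k v := ⟨((n : ZMod q) ^ (Multiplicative.toAdd k).val * v.1.1,
      (n : ZMod q) ^ (Multiplicative.toAdd k).val * v.1.2), by
    intro e
    apply v.2
    have hc : (n : ZMod q) ^ (Multiplicative.toAdd k).val ≠ 0 :=
      pow_ne_zero _ (zeta_ne_zero (p := p))
    have e1 : (n : ZMod q) ^ (Multiplicative.toAdd k).val * v.1.1 = 0 := congrArg Prod.fst e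
    have e2 : (n : ZMod q) ^ (Multiplicative.toAdd k).val * v.1.2 = 0 := congrArg Prod.snd e
    refine Prod.ext ?_ ?_
    · rcases mul_eq_zero.mp e1 with h | h
      · exact absurd h hc
      · exact h
    · rcases mul_eq_zero.mp e2 with h | h
      · exact absurd h hc
      · exact h⟩
  one_smul v := by
    apply Subtype.ext
    show ((n : ZMod q) ^ (Multiplicative.toAdd (1 : Multiplicative (ZMod p))).val * v.1.1,
      (n : ZMod q) ^ (Multiplicative.toAdd (1 : Multiplicative (ZMod p))).val * v.1.2) = v.1
    simp
  mul_smul k k' v := by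
    apply Subtype.ext
    show ((n : ZMod q) ^ (Multiplicative.toAdd (k * k')).val * v.1.1,
        (n : ZMod q) ^ (Multiplicative.toAdd (k * k')).val * v.1.2)
      = ((n : ZMod q) ^ (Multiplicative.toAdd k).val *
          ((n : ZMod q) ^ (Multiplicative.toAdd k').val * v.1.1),
         (n : ZMod q) ^ (Multiplicative.toAdd k).val *
          ((n : ZMod q) ^ (Multiplicative.toAdd k').val * v.1.2))
    have h : (Multiplicative.toAdd (k * k')) = Multiplicative.toAdd k + Multiplicative.toAdd k' :=
      rfl
    rw [h, key]
    exact Prod.ext (by ring) (by ring)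

lemma smul_def (k : Multiplicative (ZMod p)) (v : Xset p q n) :
    (k • v).1 = ((n : ZMod q) ^ (Multiplicative.toAdd k).val * v.1.1,
      (n : ZMod q) ^ (Multiplicative.toAdd k).val * v.1.2) := rfl

lemma stab_free (k : Multiplicative (ZMod p)) (v : Xset p q n) (h : k • v = v) : k = 1 := by
  have h1 := congrArg (fun z : Xset p q n => z.1) h
  have e1 : (n : ZMod q) ^ (Multiplicative.toAdd k).val * v.1.1 = v.1.1 :=
    congrArg Prod.fst h1
  have e2 : (n : ZMod q) ^ (Multiplicative.toAdd k).val * v.1.2 = v.1.2 :=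
    congrArg Prod.snd h1
  have hone : (n : ZMod q) ^ (Multiplicative.toAdd k).val = 1 := by
    by_cases hv : v.1.1 = 0
    · have hv2 : v.1.2 ≠ 0 := fun e => v.2 (Prod.ext hv e)
      have h2 : ((n : ZMod q) ^ (Multiplicative.toAdd k).val - 1) * v.1.2 = 0 := by
        linear_combination e2
      rcases mul_eq_zero.mp h2 with h3 | h3
      · linear_combination h3
      · exact absurd h3 hv2
    · have h2 : ((n : ZMod q) ^ (Multiplicative.toAdd k).val - 1) * v.1.1 = 0 := by
        linear_combination e1
      rcases mul_eq_zero.mp h2 with h3 | h3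
      · linear_combination h3
      · exact absurd h3 hv
  have : Multiplicative.toAdd k = 0 := pow_val_eq_one_iff.mp hone
  exact this

lemma card_orbits_mul :
    Nat.card (Quotient (MulAction.orbitRel (Multiplicative (ZMod p)) (Xset p q n))) * p
      = q ^ 2 - 1 := by
  classical
  letI : Fintype (Xset p q n) := inferInstanceAs (Fintype {v : ZMod q × ZMod q // v ≠ 0})
  letI instΩ : Fintype (Quotient (MulAction.orbitRel (Multiplicative (ZMod p)) (Xset p q n))) :=
    Fintype.ofFinite _
  letI : ∀ b : Xset p q n, Fintype (MulAction.stabilizer (Multiplicative (ZMod p)) b) :=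
    fun _ => Fintype.ofFinite _
  have hstab : ∀ v : Xset p q n,
      MulAction.stabilizer (Multiplicative (ZMod p)) v = ⊥ := by
    intro v
    rw [eq_bot_iff]
    intro k hk
    exact (Subgroup.mem_bot).mpr (stab_free p q n k v hk)
  have hcard1 : ∀ v : Xset p q n,
      Fintype.card (MulAction.stabilizer (Multiplicative (ZMod p)) v) = 1 := by
    intro v
    rw [← Nat.card_eq_fintype_card, hstab v]
    exact Subgroup.card_bot
  have hX : Fintype.card (Xset p q n) = q ^ 2 - 1 := by
    have e : Fintype.card (Xset p q n)
        = Fintype.card {v : ZMod q × ZMod q // ¬ (v = 0)} :=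
      Fintype.card_congr (Equiv.cast rfl)
    rw [e, Fintype.card_subtype_compl, Fintype.card_prod, ZMod.card, Fintype.card_subtype_eq,
      pow_two]
  have hmain := MulAction.card_eq_sum_card_group_div_card_stabilizer (Multiplicative (ZMod p))
    (Xset p q n)
  calc Nat.card (Quotient (MulAction.orbitRel (Multiplicative (ZMod p)) (Xset p q n))) * p
      = Fintype.card (Quotient (MulAction.orbitRel (Multiplicative (ZMod p)) (Xset p q n))) * p
        := by rw [Nat.card_eq_fintype_card]
    _ = ∑ _ω : Quotient (MulAction.orbitRel (Multiplicative (ZMod p)) (Xset p q n)), p := by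
        rw [Finset.sum_const, Finset.card_univ, smul_eq_mul]
    _ = ∑ ω : Quotient (MulAction.orbitRel (Multiplicative (ZMod p)) (Xset p q n)),
          Fintype.card (Multiplicative (ZMod p)) /
            Fintype.card (MulAction.stabilizer (Multiplicative (ZMod p)) ω.out) := by
        refine Finset.sum_congr rfl (fun ω _ => ?_)
        rw [hcard1, Nat.div_one, Fintype.card_multiplicative, ZMod.card]
    _ = Fintype.card (Xset p q n) := hmain.symm
    _ = q ^ 2 - 1 := hX

end act
end MSAux

/-- The number of orbits of `G = ℤ_q ⋊_n ℤ_p` acting by simultaneous conjugation on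
the set of commuting pairs of elements of `G` equals `(q² − 1 + p³)/p` (the rank of
the Mignard–Schauenburg modular categories `𝒵(Vect_G^ω)`). -/
theorem card_orbits_commuting_pairs_MS (p q n : ℕ) [Fact p.Prime] [Fact q.Prime]
    (hp : Odd p) (hq : Odd q) (hpq : p ∣ q - 1)
    [Fact (orderOf (n : ZMod q) = p)] :
    Nat.card (Quot (fun z w : {z : MS p q n × MS p q n // z.1 * z.2 = z.2 * z.1} =>
      ∃ x : MS p q n, x * z.val.1 * x⁻¹ = w.val.1 ∧ x * z.val.2 * x⁻¹ = w.val.2)) =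
      (q ^ 2 - 1 + p ^ 3) / p := by
  classical
  haveI : NeZero p := ⟨(Fact.out : p.Prime).ne_zero⟩
  haveI : NeZero q := ⟨(Fact.out : q.Prime).ne_zero⟩
  set S := {z : MS p q n × MS p q n // z.1 * z.2 = z.2 * z.1} with hS
  set r : S → S → Prop := fun z w =>
      ∃ x : MS p q n, x * z.val.1 * x⁻¹ = w.val.1 ∧ x * z.val.2 * x⁻¹ = w.val.2 with hr
  set Ω := Quotient (MulAction.orbitRel (Multiplicative (ZMod p)) (MSAux.Xset p q n)) with hΩ
  set C : S → Prop := fun z => z.val.1.2 = 0 ∧ z.val.2.2 = 0 ∧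
      ¬(z.val.1.1 = 0 ∧ z.val.2.1 = 0) with hC
  have hvec : ∀ z : S, C z → ((z.val.1.1, z.val.2.1) : ZMod q × ZMod q) ≠ 0 := by
    intro z hz e
    exact hz.2.2 ⟨congrArg Prod.fst e, congrArg Prod.snd e⟩
  set F : S → Ω ⊕ (ZMod p × ZMod p) := fun z =>
    if h : C z then Sum.inl (Quotient.mk (MulAction.orbitRel (Multiplicative (ZMod p))
        (MSAux.Xset p q n)) ⟨((z.val.1.1, z.val.2.1) : ZMod q × ZMod q), hvec z h⟩)
    else Sum.inr (z.val.1.2, z.val.2.2) with hF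
  -- basic properties of r
  have hmulconj : ∀ (x y g : MS p q n), (y * x) * g * (y * x)⁻¹ = y * (x * g * x⁻¹) * y⁻¹ := by
    intros; group
  have hrefl : ∀ z : S, r z z := fun z => ⟨1, by group, by group⟩
  have hsymm : ∀ z w : S, r z w → r w z := by
    rintro z w ⟨x, h1, h2⟩
    exact ⟨x⁻¹, by rw [← h1]; group, by rw [← h2]; group⟩
  have htrans : ∀ z w v : S, r z w → r w v → r z v := by
    rintro z w v ⟨x, h1, h2⟩ ⟨y, h3, h4⟩
    exact ⟨y * x, by rw [hmulconj, h1, h3], by rw [hmulconj, h2, h4]⟩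
  have hsnd : ∀ (x g : MS p q n), (x * g * x⁻¹).2 = g.2 := by
    intro x g; rw [MSAux.conj_def]
  have hfst : ∀ (x g : MS p q n), g.2 = 0 →
      (x * g * x⁻¹).1 = (n : ZMod q) ^ x.2.val * g.1 := by
    intro x g hg
    rw [MSAux.conj_def, hg]
    show (1 - (n : ZMod q) ^ (0 : ZMod p).val) * x.1 + (n : ZMod q) ^ x.2.val * g.1 = _
    simp
  -- F respects r
  have hrespect : ∀ z w : S, r z w → F z = F w := by
    rintro z w ⟨x, h1, h2⟩
    have hs1 : w.val.1.2 = z.val.1.2 := by rw [← h1, hsnd]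
    have hs2 : w.val.2.2 = z.val.2.2 := by rw [← h2, hsnd]
    have hzpow : (n : ZMod q) ^ x.2.val ≠ 0 := pow_ne_zero _ (MSAux.zeta_ne_zero (p := p))
    by_cases hz : C z
    · have hw1 : w.val.1.1 = (n : ZMod q) ^ x.2.val * z.val.1.1 := by
        rw [← h1, hfst x _ hz.1]
      have hw2 : w.val.2.1 = (n : ZMod q) ^ x.2.val * z.val.2.1 := by
        rw [← h2, hfst x _ hz.2.1]
      have hw : C w := ⟨hs1.trans hz.1, hs2.trans hz.2.1, by
        rintro ⟨e1, e2⟩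
        refine hz.2.2 ⟨?_, ?_⟩
        · rcases mul_eq_zero.mp (hw1 ▸ e1) with h | h
          · exact absurd h hzpow
          · exact h
        · rcases mul_eq_zero.mp (hw2 ▸ e2) with h | h
          · exact absurd h hzpow
          · exact h⟩
      rw [hF]; dsimp only
      rw [dif_pos hz, dif_pos hw]
      set vz : MSAux.Xset p q n :=
        ⟨((z.val.1.1, z.val.2.1) : ZMod q × ZMod q), hvec z hz⟩ with hvzd
      set vw : MSAux.Xset p q n :=
        ⟨((w.val.1.1, w.val.2.1) : ZMod q × ZMod q), hvec w hw⟩ with hvwd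
      have hvw : (Multiplicative.ofAdd x.2) • vz = vw := by
        apply Subtype.ext
        rw [MSAux.smul_def]
        exact Prod.ext hw1.symm hw2.symm
      refine congrArg Sum.inl ?_
      rw [← hvw]
      exact (Quotient.sound (MulAction.mem_orbit _ _)).symm
    · have hw : ¬ C w := by
        intro hw
        have hz12 : z.val.1.2 = 0 := hs1.symm.trans hw.1
        have hz22 : z.val.2.2 = 0 := hs2.symm.trans hw.2.1
        refine hz ⟨hz12, hz22, ?_⟩
        rintro ⟨e1, e2⟩
        refine hw.2.2 ⟨?_, ?_⟩
        · rw [← h1, hfst x _ hz12, e1, mul_zero]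
        · rw [← h2, hfst x _ hz22, e2, mul_zero]
      rw [hF]; dsimp only
      rw [dif_neg hz, dif_neg hw, hs1, hs2]
  -- surjectivity
  have hsurj : Function.Surjective (Quot.lift F hrespect) := by
    rintro (o | ij)
    · induction o using Quotient.ind with
      | _ v =>
        refine ⟨Quot.mk r ⟨(MS.mk v.1.1 0, MS.mk v.1.2 0), MSAux.comm_qq _ _⟩, ?_⟩
        show F _ = _
        have hCz : C ⟨(MS.mk v.1.1 0, MS.mk v.1.2 0), MSAux.comm_qq _ _⟩ := by
          simp only [hC]
          exact ⟨rfl, rfl, fun e => v.2 (Prod.ext e.1 e.2)⟩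
        rw [hF]; dsimp only
        rw [dif_pos hCz]
        exact congrArg Sum.inl (congrArg _ (Subtype.ext rfl))
    · refine ⟨Quot.mk r ⟨(MS.mk 0 ij.1, MS.mk 0 ij.2), MSAux.comm_pp _ _⟩, ?_⟩
      show F _ = _
      have hCz : ¬ C ⟨(MS.mk 0 ij.1, MS.mk 0 ij.2), MSAux.comm_pp _ _⟩ :=
        fun h => h.2.2 ⟨rfl, rfl⟩
      rw [hF]; dsimp only
      rw [dif_neg hCz]
      rfl
  -- injectivity
  have hinj2 : ∀ z w : S, F z = F w → r z w := by
    intro z w h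
    by_cases hz : C z <;> by_cases hw : C w
    · rw [hF] at h; dsimp only at h; rw [dif_pos hz, dif_pos hw] at h
      obtain ⟨k, hk⟩ := Quotient.exact (Sum.inl.inj h)
      have hk' := congrArg Subtype.val hk
      beta_reduce at hk'
      replace hk' := (MSAux.smul_def p q n k _).symm.trans hk'
      have hk1 : (n : ZMod q) ^ (Multiplicative.toAdd k).val * w.val.1.1 = z.val.1.1 :=
        congrArg Prod.fst hk'
      have hk2 : (n : ZMod q) ^ (Multiplicative.toAdd k).val * w.val.2.1 = z.val.2.1 :=
        congrArg Prod.snd hk'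
      refine hsymm _ _ ⟨(MS.mk 0 (Multiplicative.toAdd k) : MS p q n),
        Prod.ext ?_ ?_, Prod.ext ?_ ?_⟩
      · rw [hfst _ _ hw.1]; exact hk1
      · rw [hsnd]; exact hw.1.trans hz.1.symm
      · rw [hfst _ _ hw.2.1]; exact hk2
      · rw [hsnd]; exact hw.2.1.trans hz.2.1.symm
    · rw [hF] at h; dsimp only at h; rw [dif_pos hz, dif_neg hw] at h
      exact absurd h (by simp)
    · rw [hF] at h; dsimp only at h; rw [dif_neg hz, dif_pos hw] at h
      exact absurd h (by simp)
    · rw [hF] at h; dsimp only at h; rw [dif_neg hz, dif_neg hw] at h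
      have hpair : ((z.val.1.2, z.val.2.2) : ZMod p × ZMod p) = (w.val.1.2, w.val.2.2) :=
        Sum.inr.inj h
      rw [Prod.mk.injEq] at hpair
      obtain ⟨hi, hj⟩ := hpair
      by_cases h0 : z.val.1.2 = 0 ∧ z.val.2.2 = 0
      · have hz0 : z.val.1.1 = 0 ∧ z.val.2.1 = 0 :=
          not_not.mp (fun d => hz ⟨h0.1, h0.2, d⟩)
        have hw0 : w.val.1.1 = 0 ∧ w.val.2.1 = 0 :=
          not_not.mp (fun d => hw ⟨hi.symm.trans h0.1, hj.symm.trans h0.2, d⟩)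
        have : z = w := Subtype.ext (Prod.ext
          (Prod.ext (hz0.1.trans hw0.1.symm) (h0.1.trans (hi.symm.trans h0.1).symm))
          (Prod.ext (hz0.2.trans hw0.2.symm) (h0.2.trans (hj.symm.trans h0.2).symm)))
        exact this ▸ hrefl z
      · have h0' : ¬ (w.val.1.2 = 0 ∧ w.val.2.2 = 0) := by
          rintro ⟨e1, e2⟩
          exact h0 ⟨hi.trans e1, hj.trans e2⟩
        obtain ⟨x, hx1, hx2⟩ := MSAux.normalize z.2 h0
        obtain ⟨y, hy1, hy2⟩ := MSAux.normalize w.2 h0'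
        refine htrans z ⟨(MS.mk 0 z.val.1.2, MS.mk 0 z.val.2.2), MSAux.comm_pp _ _⟩ w
          ⟨x, hx1, hx2⟩ (hsymm _ _ ⟨y, ?_, ?_⟩)
        · rw [hy1, ← hi]; rfl
        · rw [hy2, ← hj]; rfl
  have hinj : Function.Injective (Quot.lift F hrespect) := by
    intro a b
    induction a using Quot.ind with
    | _ z =>
      induction b using Quot.ind with
      | _ w =>
        intro h
        exact Quot.sound (hinj2 z w h)
  -- counting
  haveI : Finite (MSAux.Xset p q n) := inferInstanceAs (Finite {v : ZMod q × ZMod q // v ≠ 0})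
  rw [Nat.card_congr (Equiv.ofBijective _ ⟨hinj, hsurj⟩), Nat.card_sum]
  have hΩcard := MSAux.card_orbits_mul p q n
  have hzp : Nat.card (ZMod p × ZMod p) = p ^ 2 := by
    rw [Nat.card_prod, Nat.card_zmod, pow_two]
  rw [hzp, ← hΩcard]
  have hp0 : 0 < p := (Fact.out : p.Prime).pos
  have harith : Nat.card Ω * p + p ^ 3 = (Nat.card Ω + p ^ 2) * p := by ring
  rw [harith, Nat.mul_div_cancel _ hp0]
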